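/- arXiv:math/0611284 — 4 statements merged into one kernel-verified Lean document; each statement's English description precedes it below -/
import Mathlib

section
/- Let G be a profinite group and M a discrete G-module satisfying the hypothesis of the previous lemma with n = 1, i.e. Ext^1_G(ℤ[G/H]/I, M) = 0 for all open normal H and all left ideals I ⊆ ℤ[G/H]. Then M is an injective object in the category of discrete G-modules. -/
/-!
Zorn's lemma yields a maximal equivariant partial extension of `f`, encoded by its graph
`Γ ⊆ F × M`. Given `x ∈ F`, some open normal subgroup `K` fixes `x`, so `x` is the image of
`1` under an equivariant `ψ : ℤ[G/K] → F`. The pullback of `Γ` along `ψ` is a map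
`I → M` on a left ideal `I`, and since `Ext¹(ℤ[G/K]/I, M) = 0` the pushout extension
`0 → M → (ℤ[G/K] × M)/Γ → ℤ[G/K]/I → 0` splits, extending that map to `ℤ[G/K]`. Pushing the
extension forward along `ψ` enlarges `Γ` to contain `x`, so the maximal graph is total.
-/

open Function

section DiscreteModules

variable (G : Type*) [Group G] [TopologicalSpace G]

def HasOpenStabilizers (X : Type*) [MulAction G X] : Prop :=
  ∀ x : X, IsOpen {g : G | g • x = x}

/-- `Ext¹(Q, M) = 0` in the category of discrete `G`-modules. -/
def ExtensionsSplit (Q M : Type) [AddCommGroup Q] [DistribMulAction G Q] [AddCommGroup M]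
    [DistribMulAction G M] : Prop :=
  ∀ (E : Type) (_ : AddCommGroup E) (_ : DistribMulAction G E), HasOpenStabilizers G E →
    ∀ (i : M →+ E) (p : E →+ Q),
      (∀ (g : G) (x : M), i (g • x) = g • i x) →
      (∀ (g : G) (e : E), p (g • e) = g • p e) →
      Injective i → Surjective p → (∀ e : E, p e = 0 ↔ e ∈ Set.range i) →
      ∃ r : E →+ M, (∀ (g : G) (e : E), r (g • e) = g • r e) ∧ ∀ x : M, r (i x) = x

/-- `Ext¹(ℤ[G/H]/I, M) = 0` for every open normal subgroup `H` and every left ideal `I`, the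
quotient `ℤ[G/H]/I` being given as the target of an equivariant surjection from `ℤ[G/H]`. -/
def ExtensionsOfCyclicQuotientsSplit (M : Type) [AddCommGroup M] [DistribMulAction G M] :
    Prop :=
  ∀ H : Subgroup G, H.Normal → IsOpen (H : Set G) →
    ∀ (Q : Type) (_ : AddCommGroup Q) (_ : DistribMulAction G Q), HasOpenStabilizers G Q →
      ∀ π : ((G ⧸ H) →₀ ℤ) →+ Q, Surjective π →
        (∀ (g : G) (d : (G ⧸ H) →₀ ℤ), π (Finsupp.mapDomain (fun x => g • x) d) = g • π d) →
        ExtensionsSplit G Q M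

variable {G} [IsTopologicalGroup G]

theorem isOpen_setOf_smul_eq_of_le {X : Type*} [MulAction G X] {x : X} {U : Subgroup G}
    (hU : IsOpen (U : Set G)) (hUx : U ≤ MulAction.stabilizer G x) :
    IsOpen {g : G | g • x = x} :=
  Subgroup.isOpen_mono hUx hU

theorem HasOpenStabilizers.prod {X Y : Type*} [MulAction G X] [MulAction G Y]
    (hX : HasOpenStabilizers G X) (hY : HasOpenStabilizers G Y) :
    HasOpenStabilizers G (X × Y) := fun x =>
  isOpen_setOf_smul_eq_of_le (U := MulAction.stabilizer G x.1 ⊓ MulAction.stabilizer G x.2)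
    ((hX x.1).inter (hY x.2)) fun _ hg => Prod.ext hg.1 hg.2

theorem HasOpenStabilizers.of_surjective {X Y : Type*} [MulAction G X] [MulAction G Y]
    (hX : HasOpenStabilizers G X) {f : X → Y} (hf : Surjective f)
    (hfG : ∀ (g : G) (x : X), f (g • x) = g • f x) : HasOpenStabilizers G Y := by
  intro y
  obtain ⟨x, rfl⟩ := hf y
  exact isOpen_setOf_smul_eq_of_le (U := MulAction.stabilizer G x) (hX x) fun g hg =>
    (hfG g x).symm.trans (congrArg f hg)

end DiscreteModules

abbrev AddSubgroup.quotientDistribMulAction {G A : Type*} [Group G] [AddCommGroup A]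
    [DistribMulAction G A] (S : AddSubgroup A) (hS : ∀ (g : G) {a : A}, a ∈ S → g • a ∈ S) :
    DistribMulAction G (A ⧸ S) where
  smul g := QuotientAddGroup.map S S (DistribSMul.toAddMonoidHom A g) fun _ => hS g
  one_smul q := QuotientAddGroup.induction_on q fun a => congrArg _ (one_smul G a)
  mul_smul g h q := QuotientAddGroup.induction_on q fun a => congrArg _ (mul_smul g h a)
  smul_zero _ := map_zero _
  smul_add _ := map_add _

section EquivariantGraph

variable (G : Type*) [Group G] {F M : Type*} [AddCommGroup F] [DistribMulAction G F]
  [AddCommGroup M] [DistribMulAction G M]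

/-- `Γ` is the graph of a `G`-equivariant additive map from a `G`-submodule of `F` to `M`. -/
structure IsEquivariantGraph (Γ : AddSubgroup (F × M)) : Prop where
  eq_zero_of_mem : ∀ {m : M}, ((0 : F), m) ∈ Γ → m = 0
  smul_mem : ∀ (g : G) {a : F × M}, a ∈ Γ → g • a ∈ Γ

theorem isEquivariantGraph_bot : IsEquivariantGraph G (⊥ : AddSubgroup (F × M)) where
  eq_zero_of_mem h := congrArg Prod.snd ((AddSubgroup.mem_bot).1 h)
  smul_mem g a h := by rw [(AddSubgroup.mem_bot).1 h, smul_zero]; exact zero_mem _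

variable {G}

namespace IsEquivariantGraph

variable {Γ : AddSubgroup (F × M)}

theorem eq_of_mem (hΓ : IsEquivariantGraph G Γ) {x : F} {m₁ m₂ : M} (h₁ : (x, m₁) ∈ Γ)
    (h₂ : (x, m₂) ∈ Γ) : m₁ = m₂ :=
  sub_eq_zero.1 <| hΓ.eq_zero_of_mem <| by simpa using Γ.sub_mem h₁ h₂

theorem sSup {c : Set (AddSubgroup (F × M))} (hc : ∀ Γ ∈ c, IsEquivariantGraph G Γ)
    (hchain : IsChain (· ≤ ·) c) (hne : c.Nonempty) : IsEquivariantGraph G (sSup c) := by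
  have hmem := fun {a : F × M} => AddSubgroup.mem_sSup_of_directedOn (x := a) hne hchain.directedOn
  refine ⟨fun h => ?_, fun g a h => ?_⟩
  · obtain ⟨Γ, hΓc, hm⟩ := hmem.1 h
    exact (hc Γ hΓc).eq_zero_of_mem hm
  · obtain ⟨Γ, hΓc, ha⟩ := hmem.1 h
    exact hmem.2 ⟨Γ, hΓc, (hc Γ hΓc).smul_mem g ha⟩

theorem comap (hΓ : IsEquivariantGraph G Γ) {P : Type*} [AddCommGroup P] [DistribMulAction G P]
    {ψ : P →+ F} (hψ : ∀ (g : G) (d : P), ψ (g • d) = g • ψ d) :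
    IsEquivariantGraph G (Γ.comap (ψ.prodMap (AddMonoidHom.id M))) where
  eq_zero_of_mem h := hΓ.eq_zero_of_mem (by simpa using h)
  smul_mem g a h := by
    change (ψ (g • a.1), g • a.2) ∈ Γ
    rw [hψ]
    exact hΓ.smul_mem g h

theorem sup_range (hΓ : IsEquivariantGraph G Γ) {P : Type*} [AddCommGroup P]
    [DistribMulAction G P] {ψ : P →+ F} {ρ : P →+ M} (hψ : ∀ (g : G) (d : P), ψ (g • d) = g • ψ d)
    (hρ : ∀ (g : G) (d : P), ρ (g • d) = g • ρ d) (hρΓ : ∀ d m, (ψ d, m) ∈ Γ → ρ d = m) :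
    IsEquivariantGraph G (Γ ⊔ (ψ.prod ρ).range) := by
  refine ⟨fun {m} h => ?_, fun g a h => ?_⟩
  · obtain ⟨a, ha, _, ⟨d, rfl⟩, had⟩ := AddSubgroup.mem_sup.1 h
    have ha' : a = (-ψ d, m - ρ d) := by
      rw [eq_sub_of_add_eq had]; ext <;> simp
    exact sub_eq_self.1 (hρΓ d (ρ d - m) (by simpa [ha'] using Γ.neg_mem ha)).symm
  · obtain ⟨a, ha, _, ⟨d, rfl⟩, rfl⟩ := AddSubgroup.mem_sup.1 h
    refine AddSubgroup.mem_sup.2 ⟨g • a, hΓ.smul_mem g ha, _, ⟨g • d, rfl⟩, ?_⟩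
    simp [hψ, hρ, smul_add]

theorem exists_hom (hΓ : IsEquivariantGraph G Γ) (htotal : ∀ x : F, ∃ m : M, (x, m) ∈ Γ) :
    ∃ φ : F →+ M, (∀ (g : G) (x : F), φ (g • x) = g • φ x) ∧ ∀ x, (x, φ x) ∈ Γ := by
  choose φ hφ using htotal
  refine ⟨AddMonoidHom.mk' φ fun x y => hΓ.eq_of_mem (hφ _) (Γ.add_mem (hφ x) (hφ y)),
    fun g x => hΓ.eq_of_mem (hφ _) (hΓ.smul_mem g (hφ x)), hφ⟩

end IsEquivariantGraph

end EquivariantGraph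

section Extension

variable {G : Type*} [Group G] [TopologicalSpace G] [IsTopologicalGroup G]
  {P Q M : Type} [AddCommGroup P] [DistribMulAction G P] [AddCommGroup Q] [DistribMulAction G Q]
  [AddCommGroup M] [DistribMulAction G M]

/-- The extension is read off a splitting of the pushout `0 → M → (P × M) ⧸ Γ → Q → 0`. -/
theorem IsEquivariantGraph.exists_hom_of_extensionsSplit (hP : HasOpenStabilizers G P)
    (hM : HasOpenStabilizers G M) {Γ : AddSubgroup (P × M)} (hΓ : IsEquivariantGraph G Γ)
    {π : P →+ Q} (hπ : Surjective π) (hπG : ∀ (g : G) (d : P), π (g • d) = g • π d)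
    (hker : ∀ d, π d = 0 ↔ ∃ m, (d, m) ∈ Γ) (hsplit : ExtensionsSplit G Q M) :
    ∃ ρ : P →+ M, (∀ (g : G) (d : P), ρ (g • d) = g • ρ d) ∧ ∀ d m, (d, m) ∈ Γ → ρ d = m := by
  let := Γ.quotientDistribMulAction hΓ.smul_mem
  let mk := QuotientAddGroup.mk' Γ
  let i : M →+ (P × M) ⧸ Γ := mk.comp (AddMonoidHom.inr P M)
  let p : (P × M) ⧸ Γ →+ Q :=
    QuotientAddGroup.lift Γ (π.comp (AddMonoidHom.fst P M)) fun a ha => (hker a.1).2 ⟨a.2, ha⟩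
  have hi_eq {d : P} {m : M} (h : (d, m) ∈ Γ) (m' : M) : mk (d, m') = i (m' - m) :=
    (QuotientAddGroup.eq_iff_sub_mem).2 (by simpa using h)
  have hi : Injective i := (injective_iff_map_eq_zero i).2 fun m hm =>
    hΓ.eq_zero_of_mem ((QuotientAddGroup.eq_zero_iff _).1 hm)
  have hp : Surjective p := fun q => let ⟨d, hd⟩ := hπ q; ⟨mk (d, 0), hd⟩
  have hmkG (g : G) (a : P × M) : mk (g • a) = g • mk a := rfl
  have hexact (e) : p e = 0 ↔ e ∈ Set.range i := by
    induction e using QuotientAddGroup.induction_on with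
    | H a =>
      refine ⟨fun h => ?_, ?_⟩
      · obtain ⟨m, hm⟩ := (hker a.1).1 h
        exact ⟨a.2 - m, (hi_eq hm a.2).symm⟩
      · rintro ⟨m, hm⟩
        rw [← hm]
        exact map_zero π
  obtain ⟨r, hrG, hri⟩ := hsplit _ _ _ ((hP.prod hM).of_surjective
    (QuotientAddGroup.mk'_surjective Γ) fun _ _ => rfl) i p
    (fun g m => by simpa [i] using hmkG g ((0 : P), m))
    (fun g e => by induction e using QuotientAddGroup.induction_on with | H a => exact hπG g a.1)
    hi hp hexact
  refine ⟨-(r.comp (mk.comp (AddMonoidHom.inl P M))), fun g d => ?_, fun d m h => ?_⟩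
  · simpa [hrG] using congrArg (-r ·) (hmkG g (d, 0))
  · simp [hi_eq h 0, hri]

end Extension

section CyclicModules

variable {G : Type*} [Group G] [TopologicalSpace G] [IsTopologicalGroup G]

attribute [local instance] Finsupp.comapDistribMulAction

theorem hasOpenStabilizers_finsupp_quotient (R : Type*) [AddCommMonoid R] (K : Subgroup G)
    [K.Normal] (hK : IsOpen (K : Set G)) : HasOpenStabilizers G ((G ⧸ K) →₀ R) := by
  intro d
  refine isOpen_setOf_smul_eq_of_le hK fun g hg => ?_
  have hfix : (fun c : G ⧸ K => g • c) = id := funext fun c => by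
    induction c using QuotientGroup.induction_on with
    | H a =>
      rw [MulAction.Quotient.smul_mk, id, QuotientGroup.eq]
      simpa [mul_assoc] using ‹K.Normal›.conj_mem _ (K.inv_mem hg) a⁻¹
  change Finsupp.mapDomain _ d = d
  rw [hfix, Finsupp.mapDomain_id]

theorem exists_finsupp_quotient_hom_single_one_eq [CompactSpace G] {F : Type*} [AddCommGroup F]
    [DistribMulAction G F] {x : F} (hx : IsOpen {g : G | g • x = x}) :
    ∃ K : OpenNormalSubgroup G, ∃ ψ : ((G ⧸ (K : Subgroup G)) →₀ ℤ) →+ F,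
      (∀ (g : G) (d : (G ⧸ (K : Subgroup G)) →₀ ℤ), ψ (g • d) = g • ψ d) ∧
        ψ (Finsupp.single 1 1) = x := by
  obtain ⟨K, hK⟩ := IsTopologicalGroup.exist_openNormalSubgroup_sub_clopen_nhds_of_one
    ⟨Subgroup.isClosed_of_isOpen (MulAction.stabilizer G x) hx, hx⟩ (one_smul G x)
  let u : G ⧸ (K : Subgroup G) → F :=
    MulAction.ofQuotientStabilizer G x ∘ Subgroup.quotientMapOfLE (t := MulAction.stabilizer G x) hK
  have hu (g : G) (c : G ⧸ (K : Subgroup G)) : u (g • c) = g • u c := by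
    induction c using QuotientGroup.induction_on with
    | H a => exact MulAction.ofQuotientStabilizer_smul G x g a
  refine ⟨K, (Finsupp.linearCombination ℤ u).toAddMonoidHom, fun g d => ?_, by
    simp only [LinearMap.toAddMonoidHom_coe, Finsupp.linearCombination_single, one_smul]
    exact (MulAction.ofQuotientStabilizer_mk G x 1).trans (one_smul G x)⟩
  induction d using Finsupp.induction_linear with
  | zero => simp
  | add d₁ d₂ h₁ h₂ => simp only [smul_add, map_add, h₁, h₂]
  | single c n =>
    simp only [Finsupp.comapSMul_single, LinearMap.toAddMonoidHom_coe,
      Finsupp.linearCombination_single, hu]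
    exact smul_comm n g (u c)

end CyclicModules

section ExtensionStep

variable {G : Type} [Group G] [TopologicalSpace G] [IsTopologicalGroup G]

attribute [local instance] Finsupp.comapDistribMulAction

theorem IsEquivariantGraph.exists_le_mem [CompactSpace G] {F M : Type} [AddCommGroup F]
    [DistribMulAction G F] [AddCommGroup M] [DistribMulAction G M] (hF : HasOpenStabilizers G F)
    (hM : HasOpenStabilizers G M) (hext : ExtensionsOfCyclicQuotientsSplit G M)
    {Γ : AddSubgroup (F × M)} (hΓ : IsEquivariantGraph G Γ) (x : F) :
    ∃ Γ', Γ ≤ Γ' ∧ IsEquivariantGraph G Γ' ∧ ∃ m, (x, m) ∈ Γ' := by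
  obtain ⟨K, ψ, hψ, hψx⟩ := exists_finsupp_quotient_hom_single_one_eq (hF x)
  have hP := hasOpenStabilizers_finsupp_quotient ℤ (K : Subgroup G) K.isOpen'
  have hΓP := hΓ.comap hψ
  let D := (Γ.comap (ψ.prodMap (AddMonoidHom.id M))).map (AddMonoidHom.fst _ M)
  let := D.quotientDistribMulAction fun g _ ⟨a, ha, had⟩ => ⟨g • a, hΓP.smul_mem g ha, had ▸ rfl⟩
  let π := QuotientAddGroup.mk' D
  have hπ : Surjective π := QuotientAddGroup.mk'_surjective D
  have hπG (g : G) (d) : π (g • d) = g • π d := rfl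
  have hker (d) : π d = 0 ↔ ∃ m, (d, m) ∈ Γ.comap (ψ.prodMap (AddMonoidHom.id M)) :=
    (QuotientAddGroup.eq_zero_iff d).trans
      ⟨fun ⟨a, ha, had⟩ => ⟨a.2, had ▸ ha⟩, fun ⟨m, hm⟩ => ⟨(d, m), hm, rfl⟩⟩
  obtain ⟨ρ, hρ, hρΓ⟩ := hΓP.exists_hom_of_extensionsSplit hP hM hπ hπG hker
    (hext _ K.isNormal' K.isOpen' _ _ _ (hP.of_surjective hπ hπG) π hπ hπG)
  exact ⟨_, le_sup_left, hΓ.sup_range hψ hρ hρΓ, _,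
    AddSubgroup.mem_sup_right ⟨Finsupp.single 1 1, Prod.ext hψx rfl⟩⟩

end ExtensionStep

theorem injective_of_ext_vanishing_on_cyclic_quotients_general
    (G : Type) [Group G] [TopologicalSpace G] [IsTopologicalGroup G]
    [CompactSpace G]
    (M : Type) [AddCommGroup M] [DistribMulAction G M]
    (hMd : ∀ x : M, IsOpen {g : G | g • x = x})
    -- `Ext¹_G(ℤ[G/H]/I, M) = 0` for all open normal `H` and all left ideals
    -- `I ⊆ ℤ[G/H]` (the quotient `ℤ[G/H]/I` being presented by a `G`-equivariant
    -- surjection `π` from `ℤ[G/H] = (G ⧸ H) →₀ ℤ`):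
    (hext : ∀ (H : Subgroup G), H.Normal → IsOpen (H : Set G) →
      ∀ (Q : Type) (_ : AddCommGroup Q) (_ : DistribMulAction G Q),
        (∀ q : Q, IsOpen {g : G | g • q = q}) →
        ∀ π : ((G ⧸ H) →₀ ℤ) →+ Q,
          Function.Surjective π →
          (∀ (g : G) (d : (G ⧸ H) →₀ ℤ),
            π (Finsupp.mapDomain (fun x => g • x) d) = g • π d) →
          ∀ (E : Type) (_ : AddCommGroup E) (_ : DistribMulAction G E),
            (∀ e : E, IsOpen {g : G | g • e = e}) →
            ∀ (i : M →+ E) (p : E →+ Q),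
              (∀ (g : G) (x : M), i (g • x) = g • i x) →
              (∀ (g : G) (e : E), p (g • e) = g • p e) →
              Function.Injective i → Function.Surjective p →
              (∀ e : E, p e = 0 ↔ e ∈ Set.range i) →
              ∃ r : E →+ M, (∀ (g : G) (e : E), r (g • e) = g • r e) ∧
                ∀ x : M, r (i x) = x) :
    -- `M` is injective: any equivariant morphism defined on a submodule `E` of a
    -- discrete `G`-module `F` extends to `F`:
    ∀ (F : Type) (_ : AddCommGroup F) (_ : DistribMulAction G F),
      (∀ x : F, IsOpen {g : G | g • x = x}) →
      ∀ (E : Type) (_ : AddCommGroup E) (_ : DistribMulAction G E),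
        (∀ e : E, IsOpen {g : G | g • e = e}) →
        ∀ (j : E →+ F), Function.Injective j →
          (∀ (g : G) (e : E), j (g • e) = g • j e) →
          ∀ (f : E →+ M), (∀ (g : G) (e : E), f (g • e) = g • f e) →
            ∃ φ : F →+ M, (∀ (g : G) (x : F), φ (g • x) = g • φ x) ∧
              ∀ e : E, φ (j e) = f e := by
  intro F _ _ hFd E _ _ _ j hj hje f hf
  have hΓ₀ := (isEquivariantGraph_bot G).sup_range hje hf fun e m h => by
    obtain ⟨he, rfl⟩ : j e = 0 ∧ m = 0 := by simpa using h
    rw [hj (he.trans j.map_zero.symm), map_zero]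
  obtain ⟨Γ, hΓ₀Γ, hmax⟩ := zorn_le_nonempty₀ {Γ | IsEquivariantGraph G Γ}
    (fun c hc hchain Γ hΓ => ⟨sSup c, IsEquivariantGraph.sSup hc hchain ⟨Γ, hΓ⟩,
      fun _ => le_sSup⟩) _ hΓ₀
  have htotal (x : F) : ∃ m, (x, m) ∈ Γ := by
    obtain ⟨Γ', hΓΓ', hΓ', m, hm⟩ := hmax.prop.exists_le_mem hFd hMd hext x
    exact ⟨m, hmax.le_of_ge hΓ' hΓΓ' hm⟩
  obtain ⟨φ, hφ, hφΓ⟩ := hmax.prop.exists_hom htotal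
  exact ⟨φ, hφ, fun e => hmax.prop.eq_of_mem (hφΓ (j e))
    (hΓ₀Γ (AddSubgroup.mem_sup_right ⟨e, rfl⟩))⟩

/-- **(Matlis-type criterion, `n = 1`: injectivity.)** Let `G` be a profinite group and
`M` a discrete `G`-module such that `Ext¹_G(ℤ[G/H]/I, M) = 0` for every open normal
subgroup `H ⊆ G` and every left ideal `I ⊆ ℤ[G/H]` (i.e. every extension of such a
quotient module by `M` splits).  Then `M` is an injective object in the category of
discrete `G`-modules: every `G`-equivariant morphism from a submodule `E` of a discrete
`G`-module `F` into `M` extends to `F`. -/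
theorem injective_of_ext_vanishing_on_cyclic_quotients
    (G : Type) [Group G] [TopologicalSpace G] [IsTopologicalGroup G]
    [CompactSpace G] [TotallyDisconnectedSpace G] [T2Space G]
    (M : Type) [AddCommGroup M] [DistribMulAction G M]
    (hMd : ∀ x : M, IsOpen {g : G | g • x = x})
    -- `Ext¹_G(ℤ[G/H]/I, M) = 0` for all open normal `H` and all left ideals
    -- `I ⊆ ℤ[G/H]` (the quotient `ℤ[G/H]/I` being presented by a `G`-equivariant
    -- surjection `π` from `ℤ[G/H] = (G ⧸ H) →₀ ℤ`):
    (hext : ∀ (H : Subgroup G), H.Normal → IsOpen (H : Set G) →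
      ∀ (Q : Type) (_ : AddCommGroup Q) (_ : DistribMulAction G Q),
        (∀ q : Q, IsOpen {g : G | g • q = q}) →
        ∀ π : ((G ⧸ H) →₀ ℤ) →+ Q,
          Function.Surjective π →
          (∀ (g : G) (d : (G ⧸ H) →₀ ℤ),
            π (Finsupp.mapDomain (fun x => g • x) d) = g • π d) →
          ∀ (E : Type) (_ : AddCommGroup E) (_ : DistribMulAction G E),
            (∀ e : E, IsOpen {g : G | g • e = e}) →
            ∀ (i : M →+ E) (p : E →+ Q),
              (∀ (g : G) (x : M), i (g • x) = g • i x) →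
              (∀ (g : G) (e : E), p (g • e) = g • p e) →
              Function.Injective i → Function.Surjective p →
              (∀ e : E, p e = 0 ↔ e ∈ Set.range i) →
              ∃ r : E →+ M, (∀ (g : G) (e : E), r (g • e) = g • r e) ∧
                ∀ x : M, r (i x) = x) :
    -- `M` is injective: any equivariant morphism defined on a submodule `E` of a
    -- discrete `G`-module `F` extends to `F`:
    ∀ (F : Type) (_ : AddCommGroup F) (_ : DistribMulAction G F),
      (∀ x : F, IsOpen {g : G | g • x = x}) →
      ∀ (E : Type) (_ : AddCommGroup E) (_ : DistribMulAction G E),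
        (∀ e : E, IsOpen {g : G | g • e = e}) →
        ∀ (j : E →+ F), Function.Injective j →
          (∀ (g : G) (e : E), j (g • e) = g • j e) →
          ∀ (f : E →+ M), (∀ (g : G) (e : E), f (g • e) = g • f e) →
            ∃ φ : F →+ M, (∀ (g : G) (x : F), φ (g • x) = g • φ x) ∧
              ∀ e : E, φ (j e) = f e :=
  injective_of_ext_vanishing_on_cyclic_quotients_general G M hMd hext
end

section
/- Let Γ be a profinite group, M a discrete Γ-module whose underlying abelian group is finitely generated and free. Then there is an exact sequence 0 → H^1(Γ, Hom_ℤ(M, A)) → Ext^1_Γ(M, A) → Ext^1_ℤ(M, A) for any discrete Γ-module A; in particular, if A is divisible (so Ext^1_ℤ(M, A) = 0) and H^1(Γ, Hom_ℤ(M, A)) = 0, then Ext^1_Γ(M, A) = 0. -/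
/-!
Since `M` is free, `p` has an additive section `s`, and any other section differs from `s` by
`i ∘ h` with `h : M →+ A`; such a section is `Γ`-equivariant exactly when the coboundary of `h`
equals the defect `g ↦ s - g • s (g⁻¹ • ·)` of `s`. Pulled back along `i`, this defect is a
`Hom(M, A)`-valued cocycle, locally constant because `M` is finitely generated and `M`, `E` have
open stabilizers. When `H¹` vanishes it is a coboundary, which corrects `s` to an equivariant
section.
-/

open Filter Topology

namespace AddMonoidHom

variable {Γ M E : Type*} [Group Γ] [AddCommGroup M] [DistribMulAction Γ M]
  [AddCommGroup E] [DistribMulAction Γ E]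

def conjSMul (g : Γ) (f : M →+ E) : M →+ E :=
  (DistribSMul.toAddMonoidHom E g).comp (f.comp (DistribSMul.toAddMonoidHom M g⁻¹))

@[simp]
lemma conjSMul_apply (g : Γ) (f : M →+ E) (x : M) : conjSMul g f x = g • f (g⁻¹ • x) := rfl

lemma conjSMul_mul (g h : Γ) (f : M →+ E) :
    conjSMul (g * h) f = conjSMul g (conjSMul h f) := by
  ext x
  simp [mul_smul]

lemma conjSMul_eq_self {S : Set M} (hS : AddSubgroup.closure S = ⊤) {u : Γ} {f : M →+ E}
    (hu : ∀ x ∈ S, u • x = x ∧ u • f x = f x) : conjSMul u f = f := by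
  refine eq_of_eqOn_dense hS fun x hx => ?_
  obtain ⟨hux, hufx⟩ := hu x hx
  rw [conjSMul_apply, inv_smul_eq_iff.mpr hux.symm, hufx]

variable [TopologicalSpace Γ] [AddGroup.FG M]

lemma eventually_conjSMul_eq_self (hM : ∀ x : M, IsOpen {g : Γ | g • x = x})
    (hE : ∀ e : E, IsOpen {g : Γ | g • e = e}) (f : M →+ E) :
    ∀ᶠ u in 𝓝 (1 : Γ), conjSMul u f = f := by
  obtain ⟨S, hS⟩ := AddGroup.fg_def.mp ‹AddGroup.FG M›
  have hopen : IsOpen (⋂ x ∈ (S : Set M), {u : Γ | u • x = x} ∩ {u : Γ | u • f x = f x}) :=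
    S.finite_toSet.isOpen_biInter fun x _ => (hM x).inter (hE (f x))
  filter_upwards [hopen.mem_nhds (by simp)] with u hu
  exact conjSMul_eq_self hS fun x hx => by simpa using Set.mem_iInter₂.mp hu x hx

lemma isLocallyConstant_conjSMul [ContinuousMul Γ] (hM : ∀ x : M, IsOpen {g : Γ | g • x = x})
    (hE : ∀ e : E, IsOpen {g : Γ | g • e = e}) (f : M →+ E) :
    IsLocallyConstant fun g : Γ => conjSMul g f := by
  refine (IsLocallyConstant.iff_eventually_eq _).2 fun g₀ => ?_
  have hleft : Tendsto (g₀⁻¹ * ·) (𝓝 g₀) (𝓝 1) := by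
    simpa using (continuous_const_mul g₀⁻¹).tendsto g₀
  filter_upwards [hleft.eventually (eventually_conjSMul_eq_self hM hE f)] with g hg
  rw [← mul_inv_cancel_left g₀ g, conjSMul_mul, hg]

end AddMonoidHom

open AddMonoidHom (conjSMul conjSMul_apply isLocallyConstant_conjSMul)

lemma Function.Exact.exists_addMonoidHom_lift {A E M N : Type*} [AddCommGroup A]
    [AddCommGroup E] [AddCommGroup M] [AddCommGroup N] {i : A →+ E} {p : E →+ M}
    (hex : Function.Exact i p) (hi : Function.Injective i) (d : N →+ E)
    (hd : ∀ x, p (d x) = 0) : ∃ h : N →+ A, ∀ x, i (h x) = d x := by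
  choose h hh using fun x => (hex (d x)).1 (hd x)
  exact ⟨AddMonoidHom.mk' h fun x y => hi (by simp [hh]), hh⟩

lemma exists_addMonoidHom_section {E M : Type*} [AddCommGroup E] [AddCommGroup M]
    [Module.Projective ℤ M] {p : E →+ M} (hp : Function.Surjective p) :
    ∃ s : M →+ E, ∀ x, p (s x) = x := by
  obtain ⟨s, hs⟩ :=
    p.toIntLinearMap.exists_rightInverse_of_surjective (LinearMap.range_eq_top.2 hp)
  exact ⟨s.toAddMonoidHom, LinearMap.congr_fun hs⟩

section Extension

variable {Γ A E M : Type*} [Group Γ] [AddCommGroup A] [AddCommGroup E] [DistribMulAction Γ E]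
  [AddCommGroup M] [DistribMulAction Γ M]
  {i : A →+ E} {p : E →+ M} {s : M →+ E}

lemma exists_equivariant_section_iff (hex : Function.Exact i p) (hi : Function.Injective i)
    (hs : ∀ x, p (s x) = x) :
    (∃ σ : M →+ E, (∀ (g : Γ) (x : M), σ (g • x) = g • σ x) ∧ ∀ x, p (σ x) = x) ↔
      ∃ h : M →+ A, ∀ (g : Γ) (x : M), i (h (g • x)) - g • i (h x) = s (g • x) - g • s x := by
  constructor
  · rintro ⟨σ, hσ, hσp⟩
    obtain ⟨h, hh⟩ := hex.exists_addMonoidHom_lift hi (s - σ) fun x => by simp [hs, hσp]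
    refine ⟨h, fun g x => ?_⟩
    simp only [hh, AddMonoidHom.sub_apply, smul_sub, hσ]
    abel
  · rintro ⟨h, hh⟩
    refine ⟨s - i.comp h, fun g x => ?_, fun x => ?_⟩
    · simp only [AddMonoidHom.sub_apply, AddMonoidHom.comp_apply, smul_sub]
      rw [sub_eq_sub_iff_sub_eq_sub, hh]
    · simp [hs, hex.apply_apply_eq_zero]

lemma exists_comp_eq_sub_conjSMul (hex : Function.Exact i p) (hi : Function.Injective i)
    (hp : ∀ (g : Γ) (e : E), p (g • e) = g • p e) (hs : ∀ x, p (s x) = x) :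
    ∃ c : Γ → (M →+ A), ∀ g x, i (c g x) = s x - conjSMul g s x := by
  choose c hc using fun g : Γ =>
    hex.exists_addMonoidHom_lift hi (s - conjSMul g s) fun x => by simp [hs, hp]
  exact ⟨c, hc⟩

lemma cocycle_of_comp_eq_sub_conjSMul [DistribMulAction Γ A] (hi : Function.Injective i)
    (hieq : ∀ (g : Γ) (a : A), i (g • a) = g • i a) {c : Γ → (M →+ A)}
    (hc : ∀ g x, i (c g x) = s x - conjSMul g s x) (g h : Γ) (x : M) :
    c (g * h) x = c g x + g • c h (g⁻¹ • x) := by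
  apply hi
  simp only [map_add, hieq, hc, conjSMul_apply, smul_sub, mul_inv_rev, mul_smul]
  abel

lemma isLocallyConstant_of_comp_eq_sub_conjSMul [TopologicalSpace Γ] [ContinuousMul Γ]
    [AddGroup.FG M] (hM : ∀ x : M, IsOpen {g : Γ | g • x = x})
    (hE : ∀ e : E, IsOpen {g : Γ | g • e = e}) (hi : Function.Injective i)
    {c : Γ → (M →+ A)} (hc : ∀ g x, i (c g x) = s x - conjSMul g s x) :
    IsLocallyConstant c := by
  refine (IsLocallyConstant.iff_eventually_eq _).2 fun g₀ => ?_
  filter_upwards [(IsLocallyConstant.iff_eventually_eq _).1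
    (isLocallyConstant_conjSMul hM hE s) g₀] with g hg
  ext x
  apply hi
  rw [hc, hc, hg]

end Extension

theorem ext_discrete_low_degree_sequence_general
    (Γ : Type) [Group Γ] [TopologicalSpace Γ] [IsTopologicalGroup Γ]
    (M A : Type)
    [AddCommGroup M] [DistribMulAction Γ M]
    [AddCommGroup A] [DistribMulAction Γ A]
    [Module.Free ℤ M] [Module.Finite ℤ M]
    (hMd : ∀ x : M, IsOpen {g : Γ | g • x = x}) :
    -- (1) exactness of `0 → H¹(Γ, Hom_ℤ(M, A)) → Ext¹_Γ(M, A) → Ext¹_ℤ(M, A)`: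
    (∀ (E : Type) (_ : AddCommGroup E) (_ : DistribMulAction Γ E),
      (∀ e : E, IsOpen {g : Γ | g • e = e}) →
      ∀ (i : A →+ E) (p : E →+ M),
        (∀ (g : Γ) (a : A), i (g • a) = g • i a) →
        (∀ (g : Γ) (e : E), p (g • e) = g • p e) →
        Function.Injective i → Function.Surjective p →
        (∀ e : E, p e = 0 ↔ e ∈ Set.range i) →
        -- an additive (`ℤ`-linear) splitting `s`, witnessing that the class of the
        -- extension maps to `0` in `Ext¹_ℤ(M, A)`:
        ∀ s : M →+ E, (∀ x : M, p (s x) = x) →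
        -- the extension splits `Γ`-equivariantly iff its cocycle is a coboundary:
        ((∃ σ : M →+ E, (∀ (g : Γ) (x : M), σ (g • x) = g • σ x) ∧ ∀ x, p (σ x) = x) ↔
          (∃ h : M →+ A, ∀ (g : Γ) (x : M),
            i (h (g • x)) - g • i (h x) = s (g • x) - g • s x))) ∧
    -- (2) if `A` is divisible and `H¹(Γ, Hom_ℤ(M, A)) = 0`, then `Ext¹_Γ(M, A) = 0`:
    ((∀ (a : A) (n : ℕ), n ≠ 0 → ∃ b : A, n • b = a) →
      (∀ c : Γ → (M →+ A), IsLocallyConstant c →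
        (∀ (g h : Γ) (x : M), c (g * h) x = c g x + g • c h (g⁻¹ • x)) →
        ∃ f : M →+ A, ∀ (g : Γ) (x : M), c g x = g • f (g⁻¹ • x) - f x) →
      ∀ (E : Type) (_ : AddCommGroup E) (_ : DistribMulAction Γ E),
        (∀ e : E, IsOpen {g : Γ | g • e = e}) →
        ∀ (i : A →+ E) (p : E →+ M),
          (∀ (g : Γ) (a : A), i (g • a) = g • i a) →
          (∀ (g : Γ) (e : E), p (g • e) = g • p e) →
          Function.Injective i → Function.Surjective p →
          (∀ e : E, p e = 0 ↔ e ∈ Set.range i) →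
          ∃ σ : M →+ E, (∀ (g : Γ) (x : M), σ (g • x) = g • σ x) ∧ ∀ x, p (σ x) = x) := by
  refine ⟨fun E _ _ _ i p _ _ hi _ hex s hs => exists_equivariant_section_iff hex hi hs, ?_⟩
  intro _ hH1 E _ _ hEd i p hieq hp hi hsurj hex
  have : AddGroup.FG M := Module.Finite.iff_addGroup_fg.mp ‹_›
  obtain ⟨s, hs⟩ := exists_addMonoidHom_section hsurj
  obtain ⟨c, hc⟩ := exists_comp_eq_sub_conjSMul hex hi hp hs
  obtain ⟨f, hf⟩ := hH1 c (isLocallyConstant_of_comp_eq_sub_conjSMul hMd hEd hi hc)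
    (cocycle_of_comp_eq_sub_conjSMul hi hieq hc)
  refine (exists_equivariant_section_iff hex hi hs).2 ⟨-f, fun g x => ?_⟩
  have hcg : i (c g (g • x)) = s (g • x) - g • s x := by simp [hc]
  rw [hf, inv_smul_smul, map_sub, hieq] at hcg
  simp only [AddMonoidHom.neg_apply, map_neg, smul_neg, ← hcg]
  abel

/-- **(Low-degree exact sequence for Ext of discrete modules, `M` finite free over
`ℤ`.)** Let `Γ` be a profinite group and `M`, `A` discrete `Γ`-modules with `M`
finitely generated and free as an abelian group.  Then:
(1) for every short exact sequence of discrete `Γ`-modules `0 → A → E → M → 0`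
equipped with an additive splitting `s` — i.e. whose class dies in `Ext¹_ℤ(M, A)` —
the extension splits `Γ`-equivariantly if and only if its associated
`Hom_ℤ(M, A)`-valued 1-cocycle `g ↦ s(g•·) - g•s(·)` is a coboundary; this expresses
the exactness of `0 → H¹(Γ, Hom_ℤ(M, A)) → Ext¹_Γ(M, A) → Ext¹_ℤ(M, A)`;
(2) in particular, if `A` is divisible (so `Ext¹_ℤ(M, A) = 0`) and
`H¹(Γ, Hom_ℤ(M, A)) = 0`, then `Ext¹_Γ(M, A) = 0`, i.e. every short exact sequence of
discrete `Γ`-modules `0 → A → E → M → 0` splits `Γ`-equivariantly. -/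
theorem ext_discrete_low_degree_sequence
    (Γ : Type) [Group Γ] [TopologicalSpace Γ] [IsTopologicalGroup Γ]
    [CompactSpace Γ] [TotallyDisconnectedSpace Γ] [T2Space Γ]
    (M A : Type)
    [AddCommGroup M] [DistribMulAction Γ M]
    [AddCommGroup A] [DistribMulAction Γ A]
    [Module.Free ℤ M] [Module.Finite ℤ M]
    (hMd : ∀ x : M, IsOpen {g : Γ | g • x = x})
    (hAd : ∀ a : A, IsOpen {g : Γ | g • a = a}) :
    -- (1) exactness of `0 → H¹(Γ, Hom_ℤ(M, A)) → Ext¹_Γ(M, A) → Ext¹_ℤ(M, A)`: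
    (∀ (E : Type) (_ : AddCommGroup E) (_ : DistribMulAction Γ E),
      (∀ e : E, IsOpen {g : Γ | g • e = e}) →
      ∀ (i : A →+ E) (p : E →+ M),
        (∀ (g : Γ) (a : A), i (g • a) = g • i a) →
        (∀ (g : Γ) (e : E), p (g • e) = g • p e) →
        Function.Injective i → Function.Surjective p →
        (∀ e : E, p e = 0 ↔ e ∈ Set.range i) →
        -- an additive (`ℤ`-linear) splitting `s`, witnessing that the class of the
        -- extension maps to `0` in `Ext¹_ℤ(M, A)`:
        ∀ s : M →+ E, (∀ x : M, p (s x) = x) →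
        -- the extension splits `Γ`-equivariantly iff its cocycle is a coboundary:
        ((∃ σ : M →+ E, (∀ (g : Γ) (x : M), σ (g • x) = g • σ x) ∧ ∀ x, p (σ x) = x) ↔
          (∃ h : M →+ A, ∀ (g : Γ) (x : M),
            i (h (g • x)) - g • i (h x) = s (g • x) - g • s x))) ∧
    -- (2) if `A` is divisible and `H¹(Γ, Hom_ℤ(M, A)) = 0`, then `Ext¹_Γ(M, A) = 0`:
    ((∀ (a : A) (n : ℕ), n ≠ 0 → ∃ b : A, n • b = a) →
      (∀ c : Γ → (M →+ A), IsLocallyConstant c →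
        (∀ (g h : Γ) (x : M), c (g * h) x = c g x + g • c h (g⁻¹ • x)) →
        ∃ f : M →+ A, ∀ (g : Γ) (x : M), c g x = g • f (g⁻¹ • x) - f x) →
      ∀ (E : Type) (_ : AddCommGroup E) (_ : DistribMulAction Γ E),
        (∀ e : E, IsOpen {g : Γ | g • e = e}) →
        ∀ (i : A →+ E) (p : E →+ M),
          (∀ (g : Γ) (a : A), i (g • a) = g • i a) →
          (∀ (g : Γ) (e : E), p (g • e) = g • p e) →
          Function.Injective i → Function.Surjective p →
          (∀ e : E, p e = 0 ↔ e ∈ Set.range i) →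
          ∃ σ : M →+ E, (∀ (g : Γ) (x : M), σ (g • x) = g • σ x) ∧ ∀ x, p (σ x) = x) :=
  ext_discrete_low_degree_sequence_general Γ M A hMd
end

section
/- Let k be a field, let X, Y be geometrically integral smooth k-varieties, and let f : X → Y be a dominant k-morphism. If the elementary obstruction of X vanishes (the inclusion k̄* ⊆ k̄(X)* of Γ-modules admits a Γ-equivariant retraction), then the elementary obstruction of Y vanishes. -/
/- Abstraction of the geometric situation: `K = k̄` is a separable closure of `k` with
Galois group `Γ = Gal(k̄/k)`; a dominant `k`-morphism `f : X → Y` of geometrically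
integral smooth `k`-varieties induces a `Γ`-equivariant inclusion of function fields
`E = k̄(Y) ⊆ F = k̄(X)`.  The vanishing of the elementary obstruction of a variety is
the existence of a `Γ`-equivariant retraction `k̄(·)* → k̄*` of the inclusion
`k̄* ⊆ k̄(·)*`. -/

/-- **(Lemma 3.1.2 of the paper, dominant case.)** Let `k` be a field, `X`, `Y`
geometrically integral smooth `k`-varieties and `f : X → Y` a dominant `k`-morphism,
inducing a `Γ`-equivariant inclusion of function fields `E = k̄(Y) ⊆ F = k̄(X)`.
If the elementary obstruction of `X` vanishes (the inclusion `k̄* ⊆ k̄(X)*` admits a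
`Γ`-equivariant retraction), then the elementary obstruction of `Y` vanishes. -/
theorem elementaryObstruction_vanishes_of_dominant
    (k K : Type) [Field k] [Field K] [Algebra k K] [IsSepClosure k K]
    -- `E = k̄(Y)` and `F = k̄(X)`, with `K ⊆ E ⊆ F`:
    (E F : Type) [Field E] [Field F]
    [Algebra K E] [Algebra K F] [Algebra E F] [IsScalarTower K E F]
    [MulSemiringAction (K ≃ₐ[k] K) E] [MulSemiringAction (K ≃ₐ[k] K) F]
    -- the `Γ`-actions are semilinear over the natural action on `K = k̄` ...
    (hE : ∀ (g : K ≃ₐ[k] K) (x : K), g • (algebraMap K E x) = algebraMap K E (g x))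
    (hF : ∀ (g : K ≃ₐ[k] K) (x : K), g • (algebraMap K F x) = algebraMap K F (g x))
    -- ... and the inclusion `E ⊆ F` induced by the dominant morphism `f` is equivariant:
    (hEF : ∀ (g : K ≃ₐ[k] K) (x : E), g • (algebraMap E F x) = algebraMap E F (g • x))
    -- the elementary obstruction of `X` vanishes:
    (hX : ∃ r : Fˣ →* Kˣ,
      (∀ (g : K ≃ₐ[k] K) (u : Fˣ),
        r (Units.map (MulSemiringAction.toRingHom (K ≃ₐ[k] K) F g).toMonoidHom u)
          = g • r u) ∧
      (∀ x : Kˣ, r (Units.map (algebraMap K F : K →* F) x) = x)) :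
    -- then the elementary obstruction of `Y` vanishes:
    ∃ s : Eˣ →* Kˣ,
      (∀ (g : K ≃ₐ[k] K) (u : Eˣ),
        s (Units.map (MulSemiringAction.toRingHom (K ≃ₐ[k] K) E g).toMonoidHom u)
          = g • s u) ∧
      (∀ x : Kˣ, s (Units.map (algebraMap K E : K →* E) x) = x) := by
  obtain ⟨r, hr1, hr2⟩ := hX
  refine ⟨r.comp (Units.map (algebraMap E F : E →* F)), ?_, ?_⟩
  · intro g u
    have : Units.map (algebraMap E F : E →* F)
        (Units.map (MulSemiringAction.toRingHom (K ≃ₐ[k] K) E g).toMonoidHom u)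
        = Units.map (MulSemiringAction.toRingHom (K ≃ₐ[k] K) F g).toMonoidHom
          (Units.map (algebraMap E F : E →* F) u) := by
      ext
      simpa using (hEF g u).symm
    simp only [MonoidHom.comp_apply, this, hr1]
  · intro x
    have : Units.map (algebraMap E F : E →* F) (Units.map (algebraMap K E : K →* E) x)
        = Units.map (algebraMap K F : K →* F) x := by
      ext
      simp [IsScalarTower.algebraMap_apply K E F]
    simp only [MonoidHom.comp_apply, this, hr2]
end

section
/- Let X be a geometrically integral variety over a field k and n ≥ 1 an integer. Suppose X possesses a closed point of degree n. Then the Albanese torsor satisfies: the n-fold contracted product Alb^n_{X/k} of the torsor Alb^1_{X/k} under Alb^0_{X/k} has a k-rational point. Consequently the period P(X), defined as the order of [Alb^1_{X/k}] in H^1(k, Alb^0_{X/k}), divides the index I(X). -/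
/-! Choosing a base point `t₀` of the torsor, `g ↦ g • t₀ -ᵥ t₀` represents its class, and for
any tuple `s` of `p` points the defect `∑ i, (g • s i -ᵥ s i)` differs from `p` times this
cocycle by a coboundary. Hence `Alb^p` has a rational point exactly when `p` kills the class,
so the least such `p > 0` is its order, which divides every `p` that works. A closed point of
degree `n` shows that `n` works: the Albanese images of its `n` geometric points are permuted
by the Galois group, so their defect vanishes. -/

/- Galois-theoretic model: `Γ = Gal(k̄/k)` is profinite; the Albanese semi-abelian
variety `Alb⁰` is represented by the discrete `Γ`-module `M` of its `k̄`-points, the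
Albanese torsor `Alb¹` by a `Γ`-set `T` with a compatible simply transitive `M`-action
(its `k̄`-points), and the universal morphism `u_X : X → Alb¹` by a `Γ`-equivariant map
`u : X(k̄) → T`.  The `n`-fold contracted product `Albⁿ` is the quotient of `Tⁿ` by the
kernel of the sum map `Mⁿ → M`, and a `k`-point of `Albⁿ` is a `Γ`-fixed class, as in
`contractedPowerHasRationalPoint` below.  A closed point of degree `n` with separable
residue field corresponds to a `Γ`-orbit of size `n` in `X(k̄)` (the general case is
reduced to this via the norm map to the symmetric power, as in the paper).  The period
`P(X)` is the order of the class of `Alb¹` in `H¹(k, Alb⁰)`, i.e. the least `p > 0`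
such that `Alb^p` has a `k`-point; the index `I(X)` is the gcd of the degrees of closed
points, so that `P(X) ∣ I(X)` is equivalent to: `P(X)` divides the degree of every
closed point, which is the form of the conclusion below. -/

/-- A `k`-rational point on the `p`-fold contracted product of the torsor `T` under the
`Γ`-module `M`: a tuple `t : Fin p → T` whose class modulo the kernel of the sum map is
fixed by `Γ`. -/
def contractedPowerHasRationalPoint
    (Γ M T : Type) [Group Γ] [AddCommMonoid M] [DistribMulAction Γ M]
    [AddAction M T] [MulAction Γ T] (p : ℕ) : Prop :=
  ∃ t : Fin p → T, ∀ g : Γ, ∃ m : Fin p → M,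
    (∀ i, g • t i = m i +ᵥ t i) ∧ (∑ i, m i) = 0

open MulAction

noncomputable abbrev addTorsorOfExistsUnique {G P : Type*} [AddGroup G] [inst : AddAction G P]
    [Nonempty P] (h : ∀ p q : P, ∃! g : G, g +ᵥ p = q) : AddTorsor G P :=
  { inst with
    vsub := fun q p => (h p q).exists.choose
    vsub_vadd' := fun q p => (h p q).exists.choose_spec
    vadd_vsub' := fun g p => (h p (g +ᵥ p)).unique (h p (g +ᵥ p)).exists.choose_spec rfl }

theorem addOrderOf_eq_sInf_nsmul_eq_zero {G : Type*} [AddMonoid G] (x : G) :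
    addOrderOf x = sInf {n | 0 < n ∧ n • x = 0} := by
  simp only [addOrderOf, Function.minimalPeriod_eq_sInf_n_pos_IsPeriodicPt,
    isPeriodicPt_add_iff_nsmul_eq_zero]

theorem contractedPowerHasRationalPoint_zero (Γ M T : Type) [Group Γ] [AddCommMonoid M]
    [DistribMulAction Γ M] [AddAction M T] [MulAction Γ T] :
    contractedPowerHasRationalPoint Γ M T 0 :=
  ⟨Fin.elim0, fun _ => ⟨Fin.elim0, fun i => i.elim0, rfl⟩⟩

def IsEquivariantVAdd (Γ M T : Type*) [SMul Γ M] [VAdd M T] [SMul Γ T] : Prop :=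
  ∀ (g : Γ) (m : M) (t : T), g • (m +ᵥ t) = (g • m) +ᵥ (g • t)

section GaloisTorsor

variable (Γ M : Type) [Group Γ] [AddCommGroup M] [DistribMulAction Γ M]

def coboundaryHom : M →+ (Γ → M) where
  toFun A g := g • A - A
  map_zero' := by ext; simp
  map_add' A B := by ext g; simp only [smul_add, Pi.add_apply]; abel

/-- Contains `H¹(Γ, M)` as the subgroup of cocycle classes, so the order of a cohomology class
can be computed here. -/
abbrev CochainsModCoboundaries : Type := (Γ → M) ⧸ (coboundaryHom Γ M).range

variable {M} {T : Type} [AddTorsor M T] [MulAction Γ T]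

def torsorClass (t₀ : T) : CochainsModCoboundaries Γ M := ↑(fun g : Γ => g • t₀ -ᵥ t₀)

variable {Γ}

theorem contractedPowerHasRationalPoint_iff_exists_sum_vsub (p : ℕ) :
    contractedPowerHasRationalPoint Γ M T p ↔
      ∃ s : Fin p → T, ∀ g : Γ, ∑ i, (g • s i -ᵥ s i) = 0 := by
  refine exists_congr fun s => forall_congr' fun g => ⟨?_, fun h => ⟨_, fun i => ?_, h⟩⟩
  · rintro ⟨m, hm, hsum⟩
    rwa [funext fun i => (eq_vadd_iff_vsub_eq _ _ _).mp (hm i)]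
  · exact (vsub_vadd _ _).symm

theorem IsEquivariantVAdd.smul_vsub (hcompat : IsEquivariantVAdd Γ M T) (g : Γ) (a b : T) :
    g • (a -ᵥ b) = g • a -ᵥ g • b := by
  rw [eq_comm, ← eq_vadd_iff_vsub_eq, ← hcompat, vsub_vadd]

theorem sum_smul_vsub_eq
    (hcompat : IsEquivariantVAdd Γ M T)
    {ι : Type} [Fintype ι] (t₀ : T) (s : ι → T) (g : Γ) :
    ∑ i, (g • s i -ᵥ s i) =
      coboundaryHom Γ M (∑ i, (s i -ᵥ t₀)) g + Fintype.card ι • (g • t₀ -ᵥ t₀) := by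
  have hsplit : ∀ i, g • s i -ᵥ s i = g • (s i -ᵥ t₀) - (s i -ᵥ t₀) + (g • t₀ -ᵥ t₀) := by
    intro i
    rw [hcompat.smul_vsub, ← vsub_sub_vsub_cancel_right (g • s i) (s i) t₀,
      ← vsub_add_vsub_cancel (g • s i) (g • t₀) t₀]
    abel
  simp only [hsplit, Finset.sum_add_distrib, Finset.sum_sub_distrib, Finset.sum_const,
    Finset.card_univ, coboundaryHom, AddMonoidHom.coe_mk, ZeroHom.coe_mk, Finset.smul_sum]

theorem contractedPowerHasRationalPoint_iff_nsmul_torsorClass_eq_zero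
    (hcompat : IsEquivariantVAdd Γ M T) (t₀ : T) (p : ℕ) :
    contractedPowerHasRationalPoint Γ M T p ↔ p • torsorClass Γ t₀ = 0 := by
  rw [contractedPowerHasRationalPoint_iff_exists_sum_vsub, torsorClass,
    ← QuotientAddGroup.mk_nsmul, QuotientAddGroup.eq_zero_iff]
  simp only [sum_smul_vsub_eq hcompat t₀, Fintype.card_fin]
  constructor
  · rintro ⟨s, hs⟩
    refine ⟨-∑ i, (s i -ᵥ t₀), funext fun g => ?_⟩
    rw [map_neg, Pi.neg_apply, Pi.smul_apply]
    exact neg_eq_of_add_eq_zero_right (hs g)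
  · rintro ⟨A, hA⟩
    cases p with
    | zero => exact ⟨Fin.elim0, fun _ => by simp⟩
    | succ q =>
      refine ⟨fun i => (Pi.single 0 (-A) : Fin (q + 1) → M) i +ᵥ t₀, fun g => ?_⟩
      simp only [vadd_vsub, Fintype.sum_pi_single', map_neg, hA, Pi.neg_apply, Pi.smul_apply,
        neg_add_cancel]

theorem sInf_contractedPowerHasRationalPoint_eq_addOrderOf
    (hcompat : IsEquivariantVAdd Γ M T) (t₀ : T) :
    sInf {p | 0 < p ∧ contractedPowerHasRationalPoint Γ M T p} =
      addOrderOf (torsorClass Γ t₀) := by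
  simp only [addOrderOf_eq_sInf_nsmul_eq_zero,
    contractedPowerHasRationalPoint_iff_nsmul_torsorClass_eq_zero hcompat t₀]

theorem contractedPowerHasRationalPoint_natCard {Y : Type} [MulAction Γ Y] (f : Y → T)
    (hf : ∀ (g : Γ) (y : Y), f (g • y) = g • f y) :
    contractedPowerHasRationalPoint Γ M T (Nat.card Y) := by
  rcases finite_or_infinite Y with hY | hY
  · have := Fintype.ofFinite Y
    obtain ⟨t₀⟩ := (inferInstance : Nonempty T)
    refine (contractedPowerHasRationalPoint_iff_exists_sum_vsub _).mpr
      ⟨f ∘ (Finite.equivFin Y).symm, fun g => ?_⟩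
    refine ((Finite.equivFin Y).symm.sum_comp fun y => g • f y -ᵥ f y).trans ?_
    calc ∑ y, (g • f y -ᵥ f y) = ∑ y, ((f (g • y) -ᵥ t₀) - (f y -ᵥ t₀)) := by
          simp only [hf, vsub_sub_vsub_cancel_right]
      _ = 0 := by
          rw [Finset.sum_sub_distrib, ← Equiv.sum_comp (toPerm g) fun y => f y -ᵥ t₀]
          exact sub_self _
  · rw [Nat.card_eq_zero_of_infinite]
    exact contractedPowerHasRationalPoint_zero Γ M T

end GaloisTorsor

theorem albanese_period_dvd_index_general
    (Γ : Type) [Group Γ]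
    -- `M = Alb⁰_{X/k}(k̄)`, a discrete `Γ`-module:
    (M : Type) [AddCommGroup M] [DistribMulAction Γ M]
    -- `T = Alb¹_{X/k}(k̄)`, a torsor under `M` with compatible `Γ`-action:
    (T : Type) [AddAction M T] [MulAction Γ T]
    (htorsor : ∀ t t' : T, ∃! m : M, m +ᵥ t = t')
    (hcompat : ∀ (g : Γ) (m : M) (t : T), g • (m +ᵥ t) = (g • m) +ᵥ (g • t))
    -- `X(k̄)` with its `Γ`-action and the Albanese map `u = u_X` on `k̄`-points:
    (Xbar : Type) [MulAction Γ Xbar]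
    (u : Xbar → T) (hu : ∀ (g : Γ) (x : Xbar), u (g • x) = g • u x)
    -- `X` has a closed point of degree `n ≥ 1`: a `Γ`-orbit of size `n` in `X(k̄)`:
    (n : ℕ)
    (hpoint : ∃ x : Xbar, Nat.card (MulAction.orbit Γ x) = n) :
    -- `Alb^n_{X/k}` has a `k`-rational point ...
    contractedPowerHasRationalPoint Γ M T n ∧
    -- ... and consequently the period `P(X)` divides `n` (hence divides the index):
    sInf {p : ℕ | 0 < p ∧ contractedPowerHasRationalPoint Γ M T p} ∣ n := by
  obtain ⟨x, rfl⟩ := hpoint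
  have : Nonempty T := ⟨u x⟩
  let := addTorsorOfExistsUnique htorsor
  have hrat : contractedPowerHasRationalPoint Γ M T (Nat.card (orbit Γ x)) :=
    contractedPowerHasRationalPoint_natCard (fun y : orbit Γ x => u y) fun g y => hu g y
  refine ⟨hrat, ?_⟩
  rw [sInf_contractedPowerHasRationalPoint_eq_addOrderOf hcompat (u x)]
  exact addOrderOf_dvd_of_nsmul_eq_zero
    ((contractedPowerHasRationalPoint_iff_nsmul_torsorClass_eq_zero hcompat (u x) _).mp hrat)

/-- **(Period divides index via the Albanese torsor.)** Let `X` be a geometrically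
integral variety over a field `k` and `n ≥ 1`.  If `X` possesses a closed point of
degree `n` (a `Γ`-orbit of size `n` in `X(k̄)`), then the `n`-fold contracted product
`Alb^n_{X/k}` of the Albanese torsor `Alb¹_{X/k}` under `Alb⁰_{X/k}` has a `k`-rational
point.  Consequently the period `P(X)` — the order of `[Alb¹_{X/k}]` in
`H¹(k, Alb⁰_{X/k})`, i.e. the least `p > 0` with `Alb^p(k) ≠ ∅` — divides `n`; as this
holds for the degree of every closed point, `P(X)` divides the index `I(X)`. -/
theorem albanese_period_dvd_index
    (Γ : Type) [Group Γ] [TopologicalSpace Γ] [IsTopologicalGroup Γ]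
    [CompactSpace Γ] [TotallyDisconnectedSpace Γ] [T2Space Γ]
    -- `M = Alb⁰_{X/k}(k̄)`, a discrete `Γ`-module:
    (M : Type) [AddCommGroup M] [DistribMulAction Γ M]
    (hMd : ∀ m : M, IsOpen {g : Γ | g • m = m})
    -- `T = Alb¹_{X/k}(k̄)`, a torsor under `M` with compatible `Γ`-action:
    (T : Type) [AddAction M T] [MulAction Γ T] [Nonempty T]
    (hTd : ∀ t : T, IsOpen {g : Γ | g • t = t})
    (htorsor : ∀ t t' : T, ∃! m : M, m +ᵥ t = t')
    (hcompat : ∀ (g : Γ) (m : M) (t : T), g • (m +ᵥ t) = (g • m) +ᵥ (g • t))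
    -- `X(k̄)` with its `Γ`-action and the Albanese map `u = u_X` on `k̄`-points:
    (Xbar : Type) [MulAction Γ Xbar]
    (hXd : ∀ x : Xbar, IsOpen {g : Γ | g • x = x})
    (u : Xbar → T) (hu : ∀ (g : Γ) (x : Xbar), u (g • x) = g • u x)
    -- `X` has a closed point of degree `n ≥ 1`: a `Γ`-orbit of size `n` in `X(k̄)`:
    (n : ℕ) (hn : 0 < n)
    (hpoint : ∃ x : Xbar, Nat.card (MulAction.orbit Γ x) = n) :
    -- `Alb^n_{X/k}` has a `k`-rational point ...
    contractedPowerHasRationalPoint Γ M T n ∧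
    -- ... and consequently the period `P(X)` divides `n` (hence divides the index):
    sInf {p : ℕ | 0 < p ∧ contractedPowerHasRationalPoint Γ M T p} ∣ n :=
  albanese_period_dvd_index_general Γ M T htorsor hcompat Xbar u hu n hpoint
end
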